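/- Let v and ṽ be m₁×m₂ matrix functions in the class C_ε(𝒟) which both satisfy the defocusing NLS equation 2v_t = i(v_xx − 2 v v* v) on the semi-strip 𝒟 and have the same initial condition v(x,0) = ṽ(x,0) = 𝒱(x) for all x ≥ 0. Then for each integer r ≥ 0 and each k with 0 ≤ k ≤ r, the derivatives (∂^k v/∂t^k)(x,0) and (∂^k v_x/∂t^k)(x,0) coincide with (∂^k ṽ/∂t^k)(x,0) and (∂^k ṽ_x/∂t^k)(x,0), respectively, for all 0 ≤ x ≤ min(ε_{4r}(v), ε_{4r}(ṽ)); i.e., these derivatives are uniquely determined by the initial condition 𝒱. -/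

import Mathlib

/-!
The equation gives `v_t = (i/2)(v_xx - 2 v v* v)` on a square `[0,e]²`, and time
derivatives commute with space derivatives there (equality of mixed partials, proved
through Fubini and the fundamental theorem of calculus). Differentiating the equation
`k` times in `t` therefore writes `∂_t^k v` as a polynomial in `v, v*` and their
`x`-derivatives of order `≤ 2k`, whose values at `t = 0` only involve the initial
datum. The induction runs over pairs of functions whose `t`-jets agree at `t = 0`; such
pairs are closed under sums, scalar multiples, products and conjugate transposes, which is
all the cubic nonlinearity needs.
-/

open Matrix Set

open Matrix Set

/-- Entrywise partial derivative in `x` on the closed square `[0,e] × [0,e]`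
(one-sided at the boundary): `g = f_x`. -/
def PX {m₁ m₂ : ℕ} (e : ℝ) (f g : ℝ → ℝ → Matrix (Fin m₁) (Fin m₂) ℂ) : Prop :=
  ∀ x ∈ Icc (0:ℝ) e, ∀ t ∈ Icc (0:ℝ) e, ∀ i j,
    HasDerivWithinAt (fun y => f y t i j) (g x t i j) (Icc (0:ℝ) e) x

/-- Entrywise partial derivative in `t` on the closed square `[0,e] × [0,e]`: `g = f_t`. -/
def PT {m₁ m₂ : ℕ} (e : ℝ) (f g : ℝ → ℝ → Matrix (Fin m₁) (Fin m₂) ℂ) : Prop :=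
  ∀ x ∈ Icc (0:ℝ) e, ∀ t ∈ Icc (0:ℝ) e, ∀ i j,
    HasDerivWithinAt (fun s => f x s i j) (g x t i j) (Icc (0:ℝ) e) t

/-- Continuity on the closed square `[0,e] × [0,e]`. -/
def ContSq {m₁ m₂ : ℕ} (e : ℝ) (f : ℝ → ℝ → Matrix (Fin m₁) (Fin m₂) ℂ) : Prop :=
  ∀ i j, ContinuousOn (fun p : ℝ × ℝ => f p.1 p.2 i j) (Icc (0:ℝ) e ×ˢ Icc (0:ℝ) e)

/-- Membership of `v` in the class `C_ε(𝒟)` (Notation 3.1 of the paper), with derivative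
witnesses `vx = v_x`, `vt = v_t`, `vxx = v_xx` on the semi-strip `𝒟 = [0,∞) × [0,a)` and
squares `𝒟(ε_k)`: `v` is continuously differentiable on `𝒟`, `v_xx` exists on `𝒟`, and for
each `k` the function `v` is `k` times continuously differentiable in `x` on `𝒟(ε_k)`. -/
structure MemCEps {m₁ m₂ : ℕ} (a : ℝ)
    (v vx vt vxx : ℝ → ℝ → Matrix (Fin m₁) (Fin m₂) ℂ) (ε : ℕ → ℝ) : Prop where
  deriv_x : ∀ x ∈ Ici (0:ℝ), ∀ t ∈ Ico (0:ℝ) a, ∀ i j,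
    HasDerivWithinAt (fun y => v y t i j) (vx x t i j) (Ici (0:ℝ)) x
  deriv_t : ∀ x ∈ Ici (0:ℝ), ∀ t ∈ Ico (0:ℝ) a, ∀ i j,
    HasDerivWithinAt (fun s => v x s i j) (vt x t i j) (Ico (0:ℝ) a) t
  cont : ∀ i j, ContinuousOn (fun p : ℝ × ℝ => v p.1 p.2 i j) (Ici 0 ×ˢ Ico 0 a)
  cont_x : ∀ i j, ContinuousOn (fun p : ℝ × ℝ => vx p.1 p.2 i j) (Ici 0 ×ˢ Ico 0 a)
  cont_t : ∀ i j, ContinuousOn (fun p : ℝ × ℝ => vt p.1 p.2 i j) (Ici 0 ×ˢ Ico 0 a)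
  deriv_xx : ∀ x ∈ Ici (0:ℝ), ∀ t ∈ Ico (0:ℝ) a, ∀ i j,
    HasDerivWithinAt (fun y => vx y t i j) (vxx x t i j) (Ici (0:ℝ)) x
  eps_pos : ∀ k, 0 < ε k
  eps_anti : Antitone ε
  eps_lt : ∀ k, ε k < a
  smooth_x : ∀ k : ℕ, ∃ w : ℕ → ℝ → ℝ → Matrix (Fin m₁) (Fin m₂) ℂ,
    w 0 = v ∧ (∀ j < k, PX (ε k) (w j) (w (j+1))) ∧ (∀ j ≤ k, ContSq (ε k) (w j))

/-- `v` satisfies the defocusing NLS equation `2v_t = i(v_xx − 2vv*v)` on `𝒟`. -/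
def SatisfiesDNLS {m₁ m₂ : ℕ} (a : ℝ)
    (v vt vxx : ℝ → ℝ → Matrix (Fin m₁) (Fin m₂) ℂ) : Prop :=
  ∀ x ∈ Ici (0:ℝ), ∀ t ∈ Ico (0:ℝ) a,
    (2 : ℂ) • vt x t = Complex.I • (vxx x t - (2 : ℂ) • (v x t * (v x t)ᴴ * v x t))

open MeasureTheory Function intervalIntegral

section Square

variable {E : Type*} [NormedAddCommGroup E] {e : ℝ}

theorem ContinuousOn.intervalIntegrable_of_mem_Icc {f : ℝ → E} (hf : ContinuousOn f (Icc 0 e))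
    {X : ℝ} (hX : X ∈ Icc 0 e) : IntervalIntegrable f volume 0 X :=
  (hf.mono (Icc_subset_Icc_right hX.2)).intervalIntegrable_of_Icc hX.1

variable [NormedSpace ℝ E]

theorem HasDerivWithinAt.eq_of_mem_Icc (he : 0 < e) {f : ℝ → E} {x : ℝ} {a b : E}
    (hx : x ∈ Icc 0 e) (ha : HasDerivWithinAt f a (Icc 0 e) x)
    (hb : HasDerivWithinAt f b (Icc 0 e) x) : a = b :=
  (uniqueDiffOn_Icc he x hx).eq_deriv _ ha hb

theorem integral_integral_swap_of_continuousOn_uncurry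
    {h : ℝ → ℝ → E} (hc : ContinuousOn (uncurry h) (Icc 0 e ×ˢ Icc 0 e)) {x s : ℝ}
    (hx : x ∈ Icc 0 e) (hs : s ∈ Icc 0 e) :
    ∫ z in 0..x, ∫ u in 0..s, h z u = ∫ u in 0..s, ∫ z in 0..x, h z u := by
  refine intervalIntegral_intervalIntegral_swap
    ((hc.integrableOn_compact (isCompact_Icc.prod isCompact_Icc)).mono_set (prod_mono ?_ ?_))
  · rw [uIoc_of_le hx.1]; exact Ioc_subset_Icc_self.trans (Icc_subset_Icc_right hx.2)
  · rw [uIoc_of_le hs.1]; exact Ioc_subset_Icc_self.trans (Icc_subset_Icc_right hs.2)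

theorem continuousOn_integral_of_continuousOn_uncurry {h : ℝ → ℝ → E}
    (hc : ContinuousOn (uncurry h) (Icc 0 e ×ˢ Icc 0 e)) {s : ℝ} (hs : s ∈ Icc 0 e) :
    ContinuousOn (fun z => ∫ u in 0..s, h z u) (Icc 0 e) := by
  have he : 0 ≤ e := hs.1.trans hs.2
  -- extend `h` continuously to the plane by projecting onto the square
  let H : ℝ → ℝ → E := fun z u => h (projIcc 0 e he z) (projIcc 0 e he u)
  have hH : Continuous (uncurry H) :=
    hc.comp_continuous (f := fun p : ℝ × ℝ => ((projIcc 0 e he p.1 : ℝ), (projIcc 0 e he p.2 : ℝ)))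
      (by fun_prop) fun p => ⟨(projIcc 0 e he p.1).2, (projIcc 0 e he p.2).2⟩
  refine (continuous_parametric_intervalIntegral_of_continuous' hH 0 s).continuousOn.congr
    fun z hz => integral_congr fun u hu => ?_
  rw [uIcc_of_le hs.1] at hu
  simp [H, projIcc_of_mem he hz, projIcc_of_mem he (Icc_subset_Icc_right hs.2 hu)]

variable [CompleteSpace E]

theorem integral_eq_sub_of_hasDerivWithinAt_Icc {f f' : ℝ → E}
    (hd : ∀ u ∈ Icc 0 e, HasDerivWithinAt f (f' u) (Icc 0 e) u)
    (hf' : ContinuousOn f' (Icc 0 e)) {s : ℝ} (hs : s ∈ Icc 0 e) :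
    ∫ u in 0..s, f' u = f s - f 0 := by
  have hsub : Icc 0 s ⊆ Icc 0 e := Icc_subset_Icc_right hs.2
  refine integral_eq_sub_of_hasDeriv_right_of_le hs.1
    (fun u hu => (hd u (hsub hu)).continuousWithinAt.mono hsub) (fun u hu => ?_)
    (hf'.intervalIntegrable_of_mem_Icc hs)
  exact (hd u (hsub (Ioo_subset_Icc_self hu))).mono_of_mem_nhdsWithin
    (Icc_mem_nhdsGT_of_mem ⟨hu.1.le, hu.2.trans_le hs.2⟩)

theorem hasDerivWithinAt_integral_Icc {f : ℝ → E} (hf : ContinuousOn f (Icc 0 e))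
    {t : ℝ} (ht : t ∈ Icc 0 e) :
    HasDerivWithinAt (fun s => ∫ u in 0..s, f u) (f t) (Icc 0 e) t := by
  have : Fact (t ∈ Icc 0 e) := ⟨ht⟩
  exact integral_hasDerivWithinAt_right (hf.intervalIntegrable_of_mem_Icc ht)
    (hf.stronglyMeasurableAtFilter_nhdsWithin measurableSet_Icc t) (hf.continuousWithinAt ht)

theorem eqOn_zero_of_forall_integral_eq_zero (he : 0 < e) {p : ℝ → E}
    (hp : ContinuousOn p (Icc 0 e)) (h : ∀ X ∈ Icc 0 e, ∫ y in 0..X, p y = 0) :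
    ∀ z ∈ Icc 0 e, p z = 0 := fun z hz =>
  (hasDerivWithinAt_integral_Icc hp hz).eq_of_mem_Icc he hz
    ((hasDerivWithinAt_const z _ 0).congr h (h z hz))

variable {φ φ₁ h h₁ : ℝ → ℝ → E}

theorem integral_integral_eq_of_hasDerivWithinAt
    (hc : ContinuousOn (uncurry h) (Icc 0 e ×ˢ Icc 0 e))
    (hc₁ : ContinuousOn (uncurry h₁) (Icc 0 e ×ˢ Icc 0 e))
    (hφt : ∀ x ∈ Icc 0 e, ∀ t ∈ Icc 0 e, HasDerivWithinAt (φ x) (h x t) (Icc 0 e) t)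
    (hhx : ∀ x ∈ Icc 0 e, ∀ t ∈ Icc 0 e, HasDerivWithinAt (h · t) (h₁ x t) (Icc 0 e) x)
    {X s : ℝ} (hX : X ∈ Icc 0 e) (hs : s ∈ Icc 0 e) :
    ∫ z in 0..X, ∫ u in 0..s, h₁ z u = (φ X s - φ X 0) - (φ 0 s - φ 0 0) := by
  have h0 : (0 : ℝ) ∈ Icc 0 e := left_mem_Icc.2 (hX.1.trans hX.2)
  have hsub : uIcc 0 s ⊆ Icc 0 e := by rw [uIcc_of_le hs.1]; exact Icc_subset_Icc_right hs.2
  rw [integral_integral_swap_of_continuousOn_uncurry hc₁ hX hs,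
    integral_congr fun u hu => integral_eq_sub_of_hasDerivWithinAt_Icc
      (fun y hy => hhx y hy u (hsub hu)) (hc₁.uncurry_right u (hsub hu)) hX,
    integral_sub ((hc.uncurry_left X hX).intervalIntegrable_of_mem_Icc hs)
      ((hc.uncurry_left 0 h0).intervalIntegrable_of_mem_Icc hs),
    integral_eq_sub_of_hasDerivWithinAt_Icc (hφt X hX) (hc.uncurry_left X hX) hs,
    integral_eq_sub_of_hasDerivWithinAt_Icc (hφt 0 h0) (hc.uncurry_left 0 h0) hs]

theorem hasDerivWithinAt_of_mixed_partials (he : 0 < e)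
    (hc₁ : ContinuousOn (uncurry φ₁) (Icc 0 e ×ˢ Icc 0 e))
    (hhc : ContinuousOn (uncurry h) (Icc 0 e ×ˢ Icc 0 e))
    (hhc₁ : ContinuousOn (uncurry h₁) (Icc 0 e ×ˢ Icc 0 e))
    (hφx : ∀ x ∈ Icc 0 e, ∀ t ∈ Icc 0 e, HasDerivWithinAt (φ · t) (φ₁ x t) (Icc 0 e) x)
    (hφt : ∀ x ∈ Icc 0 e, ∀ t ∈ Icc 0 e, HasDerivWithinAt (φ x) (h x t) (Icc 0 e) t)
    (hhx : ∀ x ∈ Icc 0 e, ∀ t ∈ Icc 0 e, HasDerivWithinAt (h · t) (h₁ x t) (Icc 0 e) x)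
    {x t : ℝ} (hx : x ∈ Icc 0 e) (ht : t ∈ Icc 0 e) :
    HasDerivWithinAt (φ₁ x) (h₁ x t) (Icc 0 e) t := by
  have h0 : (0 : ℝ) ∈ Icc 0 e := left_mem_Icc.2 he.le
  -- both sides of `φ₁ z s = φ₁ z 0 + ∫₀ˢ h₁ z` have the same primitive in `z`
  have hφ₁ : ∀ s ∈ Icc 0 e, φ₁ x s = φ₁ x 0 + ∫ u in 0..s, h₁ x u := by
    intro s hs
    have hcs := hc₁.uncurry_right s hs
    have hc0 := hc₁.uncurry_right 0 h0
    have hci := continuousOn_integral_of_continuousOn_uncurry hhc₁ hs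
    have := eqOn_zero_of_forall_integral_eq_zero he
      (p := fun z => φ₁ z s - φ₁ z 0 - ∫ u in 0..s, h₁ z u) ((hcs.fun_sub hc0).fun_sub hci)
      (fun X hX => by
        rw [integral_sub ((hcs.fun_sub hc0).intervalIntegrable_of_mem_Icc hX)
            (hci.intervalIntegrable_of_mem_Icc hX),
          integral_sub (hcs.intervalIntegrable_of_mem_Icc hX)
            (hc0.intervalIntegrable_of_mem_Icc hX),
          integral_eq_sub_of_hasDerivWithinAt_Icc (fun y hy => hφx y hy s hs) hcs hX,
          integral_eq_sub_of_hasDerivWithinAt_Icc (fun y hy => hφx y hy 0 h0) hc0 hX,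
          integral_integral_eq_of_hasDerivWithinAt hhc hhc₁ hφt hhx hX hs]
        abel) x hx
    rw [← sub_eq_zero, ← this]
    abel
  exact ((hasDerivWithinAt_integral_Icc (hhc₁.uncurry_left x hx) ht).const_add _).congr
    hφ₁ (hφ₁ t ht)

end Square

section SquareFields

variable {m₁ m₂ m₃ : ℕ} {e : ℝ}

abbrev SqField (m n : ℕ) := ℝ → ℝ → Matrix (Fin m) (Fin n) ℂ

def EqOnSq (e : ℝ) (F G : SqField m₁ m₂) : Prop :=
  ∀ x ∈ Icc 0 e, ∀ t ∈ Icc 0 e, F x t = G x t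

def EqAtZero (e : ℝ) (F G : SqField m₁ m₂) : Prop :=
  ∀ x ∈ Icc 0 e, F x 0 = G x 0

variable {F F' G G' : SqField m₁ m₂}

theorem EqAtZero.congr (he : 0 < e) (h : EqAtZero e F G) (hF : EqOnSq e F F')
    (hG : EqOnSq e G G') : EqAtZero e F' G' := fun x hx => by
  rw [← hF x hx 0 (left_mem_Icc.2 he.le), ← hG x hx 0 (left_mem_Icc.2 he.le), h x hx]

theorem PX.congr (h : PX e F G) (hE : EqOnSq e F F') : PX e F' G :=
  fun x hx t ht i j => (h x hx t ht i j).congr (fun y hy => by rw [hE y hy t ht])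
    (by rw [hE x hx t ht])

theorem PT.congr (h : PT e F G) (hE : EqOnSq e F F') : PT e F' G :=
  fun x hx t ht i j => (h x hx t ht i j).congr (fun s hs => by rw [hE x hx s hs])
    (by rw [hE x hx t ht])

theorem PX.unique (he : 0 < e) (h : PX e F G) (h' : PX e F G') : EqOnSq e G G' :=
  fun x hx t ht => Matrix.ext fun i j => (h x hx t ht i j).eq_of_mem_Icc he hx (h' x hx t ht i j)

theorem PT.unique (he : 0 < e) (h : PT e F G) (h' : PT e F G') : EqOnSq e G G' :=
  fun x hx t ht => Matrix.ext fun i j => (h x hx t ht i j).eq_of_mem_Icc he ht (h' x hx t ht i j)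

theorem EqAtZero.of_PX (he : 0 < e) (h : EqAtZero e F G) (hF : PX e F F') (hG : PX e G G') :
    EqAtZero e F' G' := fun x hx => by
  have h0 : (0 : ℝ) ∈ Icc 0 e := left_mem_Icc.2 he.le
  ext i j
  exact (hF x hx 0 h0 i j).eq_of_mem_Icc he hx
    ((hG x hx 0 h0 i j).congr (fun y hy => by rw [h y hy]) (by rw [h x hx]))

theorem PX.of_le {e' : ℝ} (hee : e ≤ e') (h : PX e' F G) : PX e F G :=
  fun x hx t ht i j => (h x (Icc_subset_Icc_right hee hx) t (Icc_subset_Icc_right hee ht) i j).mono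
    (Icc_subset_Icc_right hee)

theorem ContSq.of_le {e' : ℝ} (hee : e ≤ e') (h : ContSq e' F) : ContSq e F :=
  fun i j => (h i j).mono (prod_mono (Icc_subset_Icc_right hee) (Icc_subset_Icc_right hee))

theorem pT_iff_pX_swap : PT e F G ↔ PX e (swap F) (swap G) :=
  ⟨fun h x hx t ht => h t ht x hx, fun h x hx t ht => h t ht x hx⟩

theorem PX.add (hF : PX e F F') (hG : PX e G G') : PX e (F + G) (F' + G') :=
  fun x hx t ht i j => (hF x hx t ht i j).add (hG x hx t ht i j)

theorem PX.const_smul (c : ℂ) (hF : PX e F F') : PX e (c • F) (c • F') :=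
  fun x hx t ht i j => (hF x hx t ht i j).const_mul c

theorem PX.conjTranspose (hF : PX e F F') :
    PX e (fun x t => (F x t)ᴴ) (fun x t => (F' x t)ᴴ) :=
  fun x hx t ht i j => (hF x hx t ht j i).star

theorem PX.mul {H H' : SqField m₂ m₃} (hF : PX e F F') (hH : PX e H H') :
    PX e (fun x t => F x t * H x t) (fun x t => F' x t * H x t + F x t * H' x t) := by
  intro x hx t ht i j
  simp only [Matrix.mul_apply, Matrix.add_apply, ← Finset.sum_add_distrib]
  exact HasDerivWithinAt.fun_sum fun k _ => (hF x hx t ht i k).mul (hH x hx t ht k j)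

theorem PT.add (hF : PT e F F') (hG : PT e G G') : PT e (F + G) (F' + G') :=
  pT_iff_pX_swap.2 ((pT_iff_pX_swap.1 hF).add (pT_iff_pX_swap.1 hG))

theorem PT.const_smul (c : ℂ) (hF : PT e F F') : PT e (c • F) (c • F') :=
  pT_iff_pX_swap.2 ((pT_iff_pX_swap.1 hF).const_smul c)

theorem PT.conjTranspose (hF : PT e F F') :
    PT e (fun x t => (F x t)ᴴ) (fun x t => (F' x t)ᴴ) :=
  pT_iff_pX_swap.2 (pT_iff_pX_swap.1 hF).conjTranspose

theorem PT.mul {H H' : SqField m₂ m₃} (hF : PT e F F') (hH : PT e H H') :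
    PT e (fun x t => F x t * H x t) (fun x t => F' x t * H x t + F x t * H' x t) :=
  pT_iff_pX_swap.2 ((pT_iff_pX_swap.1 hF).mul (pT_iff_pX_swap.1 hH))

theorem ContSq.congr (h : ContSq e F) (hE : EqOnSq e F G) : ContSq e G :=
  fun i j => (h i j).congr fun p hp => congrFun₂ (hE p.1 hp.1 p.2 hp.2).symm i j

theorem ContSq.add (hF : ContSq e F) (hG : ContSq e G) : ContSq e (F + G) :=
  fun i j => (hF i j).add (hG i j)

theorem ContSq.const_smul (c : ℂ) (hF : ContSq e F) : ContSq e (c • F) :=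
  fun i j => (hF i j).const_smul c

theorem ContSq.conjTranspose (hF : ContSq e F) : ContSq e (fun x t => (F x t)ᴴ) :=
  fun i j => (hF j i).star

theorem ContSq.mul {H : SqField m₂ m₃} (hF : ContSq e F) (hH : ContSq e H) :
    ContSq e (fun x t => F x t * H x t) := by
  intro i j
  simp only [Matrix.mul_apply]
  exact continuousOn_finsetSum _ fun k _ => (hF i k).fun_mul (hH k j)

theorem PT.of_mixed_partials (he : 0 < e) {F₁ H H₁ : SqField m₁ m₂} (hF₁ : ContSq e F₁)
    (hH : ContSq e H) (hH₁ : ContSq e H₁) (hFx : PX e F F₁) (hFt : PT e F H)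
    (hHx : PX e H H₁) : PT e F₁ H₁ := fun _ hx _ ht i j =>
  hasDerivWithinAt_of_mixed_partials (φ₁ := fun x t => F₁ x t i j) (h := fun x t => H x t i j)
    (h₁ := fun x t => H₁ x t i j) he (hF₁ i j) (hH i j) (hH₁ i j)
    (fun x hx t ht => hFx x hx t ht i j) (fun x hx t ht => hFt x hx t ht i j)
    (fun x hx t ht => hHx x hx t ht i j) hx ht

end SquareFields

section XSmooth

variable {m₁ m₂ m₃ : ℕ} {e : ℝ}

def HasContXDerivs (e : ℝ) : ℕ → SqField m₁ m₂ → Prop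
  | 0, F => ContSq e F
  | n + 1, F => ContSq e F ∧ ∃ F', PX e F F' ∧ HasContXDerivs e n F'

namespace HasContXDerivs

variable {n : ℕ} {F G : SqField m₁ m₂}

theorem contSq (h : HasContXDerivs e n F) : ContSq e F := by
  cases n with
  | zero => exact h
  | succ n => exact h.1

theorem congr : ∀ {n : ℕ} {F G : SqField m₁ m₂},
    HasContXDerivs e n F → EqOnSq e F G → HasContXDerivs e n G
  | 0, _, _, h, hE => ContSq.congr h hE
  | _ + 1, _, _, ⟨hc, F', hx, h'⟩, hE => ⟨hc.congr hE, F', hx.congr hE, h'⟩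

theorem of_succ : ∀ {n : ℕ} {F : SqField m₁ m₂}, HasContXDerivs e (n + 1) F → HasContXDerivs e n F
  | 0, _, h => h.1
  | _ + 1, _, ⟨hc, F', hx, h'⟩ => ⟨hc, F', hx, of_succ h'⟩

theorem of_le {n n' : ℕ} (hn : n ≤ n') (h : HasContXDerivs e n' F) : HasContXDerivs e n F := by
  induction hn with
  | refl => exact h
  | step _ ih => exact ih h.of_succ

theorem add : ∀ {n : ℕ} {F G : SqField m₁ m₂},
    HasContXDerivs e n F → HasContXDerivs e n G → HasContXDerivs e n (F + G)
  | 0, _, _, hF, hG => ContSq.add hF hG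
  | _ + 1, _, _, ⟨hFc, F', hFx, hF'⟩, ⟨hGc, G', hGx, hG'⟩ =>
    ⟨hFc.add hGc, F' + G', hFx.add hGx, add hF' hG'⟩

theorem const_smul (c : ℂ) : ∀ {n : ℕ} {F : SqField m₁ m₂},
    HasContXDerivs e n F → HasContXDerivs e n (c • F)
  | 0, _, hF => ContSq.const_smul c hF
  | _ + 1, _, ⟨hFc, F', hFx, hF'⟩ => ⟨hFc.const_smul c, c • F', hFx.const_smul c, const_smul c hF'⟩

theorem conjTranspose : ∀ {n : ℕ} {F : SqField m₁ m₂},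
    HasContXDerivs e n F → HasContXDerivs e n (fun x t => (F x t)ᴴ)
  | 0, _, hF => ContSq.conjTranspose hF
  | _ + 1, _, ⟨hFc, _, hFx, hF'⟩ => ⟨hFc.conjTranspose, _, hFx.conjTranspose, conjTranspose hF'⟩

theorem mul : ∀ {n : ℕ} {F : SqField m₁ m₂} {H : SqField m₂ m₃},
    HasContXDerivs e n F → HasContXDerivs e n H → HasContXDerivs e n (fun x t => F x t * H x t)
  | 0, _, _, hF, hH => ContSq.mul hF hH
  | _ + 1, _, _, hF@⟨hFc, _, hFx, hF'⟩, hH@⟨hHc, _, hHx, hH'⟩ =>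
    ⟨hFc.mul hHc, _, hFx.mul hHx, (mul hF' hH.of_succ).add (mul hF.of_succ hH')⟩

theorem of_PX (he : 0 < e) (h : HasContXDerivs e (n + 1) F) (hF : PX e F G) :
    HasContXDerivs e n G :=
  let ⟨_, _, hF', h'⟩ := h
  h'.congr (hF'.unique he hF)

theorem of_chain : ∀ (n : ℕ) (c : ℕ → SqField m₁ m₂),
    (∀ j < n, PX e (c j) (c (j + 1))) → (∀ j ≤ n, ContSq e (c j)) → HasContXDerivs e n (c 0)
  | 0, _, _, hc => hc 0 le_rfl
  | n + 1, c, hx, hc => ⟨hc 0 n.succ.zero_le, c 1, hx 0 n.succ_pos,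
    of_chain n (fun j => c (j + 1)) (fun j hj => hx (j + 1) (by omega))
      (fun j hj => hc (j + 1) (by omega))⟩

end HasContXDerivs

end XSmooth

section TJets

variable {m₁ m₂ m₃ : ℕ} {e : ℝ}

def BaseAgree (e : ℝ) (n : ℕ) (F G : SqField m₁ m₂) : Prop :=
  HasContXDerivs e n F ∧ HasContXDerivs e n G ∧ EqAtZero e F G

/-- `F` and `G` agree at `t = 0` together with `k` successive `t`-derivatives, the `j`-th of
which has `n - 2j` continuous `x`-derivatives (one `t`-derivative costs two `x`-derivatives,
as for NLS). -/
def TJetsAgree (e : ℝ) : ℕ → ℕ → SqField m₁ m₂ → SqField m₁ m₂ → Prop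
  | 0, n, F, G => BaseAgree e n F G
  | k + 1, n, F, G => BaseAgree e n F G ∧
      ∃ F' G', PT e F F' ∧ PT e G G' ∧ TJetsAgree e k (n - 2) F' G'

namespace BaseAgree

variable {n : ℕ} {F F' G G' : SqField m₁ m₂}

theorem add (h : BaseAgree e n F G) (h' : BaseAgree e n F' G') :
    BaseAgree e n (F + F') (G + G') :=
  ⟨h.1.add h'.1, h.2.1.add h'.2.1, fun x hx => congrArg₂ (· + ·) (h.2.2 x hx) (h'.2.2 x hx)⟩

theorem const_smul (c : ℂ) (h : BaseAgree e n F G) : BaseAgree e n (c • F) (c • G) :=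
  ⟨h.1.const_smul c, h.2.1.const_smul c, fun x hx => congrArg (c • ·) (h.2.2 x hx)⟩

theorem conjTranspose (h : BaseAgree e n F G) :
    BaseAgree e n (fun x t => (F x t)ᴴ) (fun x t => (G x t)ᴴ) :=
  ⟨h.1.conjTranspose, h.2.1.conjTranspose, fun x hx => congrArg (·ᴴ) (h.2.2 x hx)⟩

theorem mul {H K : SqField m₂ m₃} (h : BaseAgree e n F G) (h' : BaseAgree e n H K) :
    BaseAgree e n (fun x t => F x t * H x t) (fun x t => G x t * K x t) :=
  ⟨h.1.mul h'.1, h.2.1.mul h'.2.1, fun x hx => congrArg₂ (· * ·) (h.2.2 x hx) (h'.2.2 x hx)⟩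

end BaseAgree

namespace TJetsAgree

variable {k n : ℕ} {F F' G G' : SqField m₁ m₂}

theorem base (h : TJetsAgree e k n F G) : BaseAgree e n F G := by
  cases k with
  | zero => exact h
  | succ k => exact h.1

theorem congr (he : 0 < e) : ∀ {k : ℕ} {F F' G G' : SqField m₁ m₂},
    TJetsAgree e k n F G → EqOnSq e F F' → EqOnSq e G G' → TJetsAgree e k n F' G'
  | 0, _, _, _, _, ⟨hF, hG, h0⟩, hEF, hEG => ⟨hF.congr hEF, hG.congr hEG, h0.congr he hEF hEG⟩
  | _ + 1, _, _, _, _, ⟨⟨hF, hG, h0⟩, F₁, G₁, hFt, hGt, h⟩, hEF, hEG =>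
    ⟨⟨hF.congr hEF, hG.congr hEG, h0.congr he hEF hEG⟩, F₁, G₁, hFt.congr hEF, hGt.congr hEG, h⟩

theorem of_succ_left : ∀ {k n : ℕ} {F G : SqField m₁ m₂},
    TJetsAgree e (k + 1) n F G → TJetsAgree e k n F G
  | 0, _, _, _, h => h.1
  | _ + 1, _, _, _, ⟨hb, F', G', hFt, hGt, h⟩ => ⟨hb, F', G', hFt, hGt, of_succ_left h⟩

theorem of_succ_right : ∀ {k n : ℕ} {F G : SqField m₁ m₂},
    TJetsAgree e k (n + 1) F G → TJetsAgree e k n F G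
  | 0, _, _, _, ⟨hF, hG, h0⟩ => ⟨hF.of_succ, hG.of_succ, h0⟩
  | _ + 1, n, _, _, ⟨⟨hF, hG, h0⟩, F', G', hFt, hGt, h⟩ => by
    refine ⟨⟨hF.of_succ, hG.of_succ, h0⟩, F', G', hFt, hGt, ?_⟩
    rcases Nat.lt_or_ge n 2 with hn | hn
    · interval_cases n <;> simpa using h
    · rw [show n + 1 - 2 = n - 2 + 1 by omega] at h
      exact of_succ_right h

theorem of_le {n n' : ℕ} (hn : n ≤ n') (h : TJetsAgree e k n' F G) : TJetsAgree e k n F G := by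
  induction hn with
  | refl => exact h
  | step _ ih => exact ih (of_succ_right h)

theorem add : ∀ {k n : ℕ} {F F' G G' : SqField m₁ m₂},
    TJetsAgree e k n F G → TJetsAgree e k n F' G' → TJetsAgree e k n (F + F') (G + G')
  | 0, _, _, _, _, _, h, h' => BaseAgree.add h h'
  | _ + 1, _, _, _, _, _, ⟨hb, _, _, hFt, hGt, h⟩, ⟨hb', _, _, hFt', hGt', h'⟩ =>
    ⟨hb.add hb', _, _, hFt.add hFt', hGt.add hGt', add h h'⟩

theorem const_smul (c : ℂ) : ∀ {k n : ℕ} {F G : SqField m₁ m₂},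
    TJetsAgree e k n F G → TJetsAgree e k n (c • F) (c • G)
  | 0, _, _, _, h => BaseAgree.const_smul c h
  | _ + 1, _, _, _, ⟨hb, _, _, hFt, hGt, h⟩ =>
    ⟨hb.const_smul c, _, _, hFt.const_smul c, hGt.const_smul c, const_smul c h⟩

theorem conjTranspose : ∀ {k n : ℕ} {F G : SqField m₁ m₂},
    TJetsAgree e k n F G → TJetsAgree e k n (fun x t => (F x t)ᴴ) (fun x t => (G x t)ᴴ)
  | 0, _, _, _, h => BaseAgree.conjTranspose h
  | _ + 1, _, _, _, ⟨hb, _, _, hFt, hGt, h⟩ =>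
    ⟨hb.conjTranspose, _, _, hFt.conjTranspose, hGt.conjTranspose, conjTranspose h⟩

theorem mul : ∀ {k n : ℕ} {F G : SqField m₁ m₂} {H K : SqField m₂ m₃},
    TJetsAgree e k n F G → TJetsAgree e k n H K →
      TJetsAgree e k n (fun x t => F x t * H x t) (fun x t => G x t * K x t)
  | 0, _, _, _, _, _, h, h' => BaseAgree.mul h h'
  | _ + 1, n, _, _, _, _, h@⟨hb, _, _, hFt, hGt, h₁⟩, h'@⟨hb', _, _, hFt', hGt', h₁'⟩ =>
    ⟨hb.mul hb', _, _, hFt.mul hFt', hGt.mul hGt',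
      (mul h₁ (h'.of_succ_left.of_le (n.sub_le 2))).add
        (mul (h.of_succ_left.of_le (n.sub_le 2)) h₁')⟩

theorem of_PX (he : 0 < e) : ∀ {k n : ℕ} {F F₁ G G₁ : SqField m₁ m₂}, 2 * k ≤ n →
    TJetsAgree e k (n + 1) F G → PX e F F₁ → PX e G G₁ → TJetsAgree e k n F₁ G₁
  | 0, _, _, _, _, _, _, ⟨hF, hG, h0⟩, hFx, hGx =>
    ⟨hF.of_PX he hFx, hG.of_PX he hGx, h0.of_PX he hFx hGx⟩
  | k + 1, n, _, _, _, _, hkn, ⟨⟨hF, hG, h0⟩, F', G', hFt, hGt, h⟩, hFx, hGx => by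
    rw [show n + 1 - 2 = n - 2 + 1 by omega] at h
    obtain ⟨_, F'₁, hF'x, -⟩ := h.base.1
    obtain ⟨_, G'₁, hG'x, -⟩ := h.base.2.1
    have h₁ : TJetsAgree e k (n - 2) F'₁ G'₁ := of_PX he (by omega) h hF'x hG'x
    have hF₁ := hF.of_PX he hFx
    have hG₁ := hG.of_PX he hGx
    exact ⟨⟨hF₁, hG₁, h0.of_PX he hFx hGx⟩, F'₁, G'₁,
      hFt.of_mixed_partials he hF₁.contSq h.base.1.contSq h₁.base.1.contSq hFx hF'x,
      hGt.of_mixed_partials he hG₁.contSq h.base.2.1.contSq h₁.base.2.1.contSq hGx hG'x, h₁⟩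

theorem eqAtZero_of_chain (he : 0 < e) : ∀ {k n : ℕ} {F G : SqField m₁ m₂},
    TJetsAgree e k n F G → ∀ f g : ℕ → SqField m₁ m₂, f 0 = F → g 0 = G →
      (∀ j < k, PT e (f j) (f (j + 1))) → (∀ j < k, PT e (g j) (g (j + 1))) →
        ∀ j ≤ k, EqAtZero e (f j) (g j)
  | _, _, _, _, h, _, _, hf0, hg0, _, _, 0, _ => by subst hf0 hg0; exact h.base.2.2
  | 0, _, _, _, _, _, _, _, _, _, _, _ + 1, hj => absurd hj (by omega)
  | _ + 1, _, _, _, ⟨_, _, _, hFt, hGt, h⟩, f, g, hf0, hg0, hf, hg, j + 1, hj =>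
    eqAtZero_of_chain he (h.congr he (hFt.unique he (hf0 ▸ hf 0 (by omega)))
        (hGt.unique he (hg0 ▸ hg 0 (by omega))))
      (fun j => f (j + 1)) (fun j => g (j + 1)) rfl rfl (fun j hj => hf (j + 1) (by omega))
      (fun j hj => hg (j + 1) (by omega)) j (by omega)

end TJetsAgree

end TJets

section DNLSSolutions

variable {m₁ m₂ : ℕ} {e : ℝ} {k n N : ℕ}

def cubic (V : SqField m₁ m₂) : SqField m₁ m₂ := fun x t => V x t * (V x t)ᴴ * V x t

/-- The value of `v_t` dictated by `2 v_t = i (v_xx - 2 v v* v)`. -/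
noncomputable def dnlsTimeDeriv (Vxx V : SqField m₁ m₂) : SqField m₁ m₂ :=
  (2⁻¹ * Complex.I) • (Vxx + (-2 : ℂ) • cubic V)

theorem TJetsAgree.dnlsTimeDeriv {Vxx V Wxx W : SqField m₁ m₂}
    (hxx : TJetsAgree e k n Vxx Wxx) (h : TJetsAgree e k n V W) :
    TJetsAgree e k n (dnlsTimeDeriv Vxx V) (dnlsTimeDeriv Wxx W) :=
  (hxx.add (((h.mul h.conjTranspose).mul h).const_smul _)).const_smul _

structure DNLSOnSq (e : ℝ) (N : ℕ) (v vx vt vxx : SqField m₁ m₂) : Prop where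
  pX : PX e v vx
  pXX : PX e vx vxx
  pT : PT e v vt
  hasContXDerivs : HasContXDerivs e N v
  eqn : ∀ x ∈ Icc 0 e, ∀ t ∈ Icc 0 e,
    (2 : ℂ) • vt x t = Complex.I • (vxx x t - (2 : ℂ) • (v x t * (v x t)ᴴ * v x t))

variable {v vx vt vxx w wx wt wxx : SqField m₁ m₂}

theorem DNLSOnSq.eqOnSq_dnlsTimeDeriv (h : DNLSOnSq e N v vx vt vxx) :
    EqOnSq e (dnlsTimeDeriv vxx v) vt := fun x hx t ht =>
  calc (2⁻¹ * Complex.I) • (vxx x t + (-2 : ℂ) • cubic v x t)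
      = (2 : ℂ)⁻¹ • Complex.I • (vxx x t - (2 : ℂ) • cubic v x t) := by
        rw [mul_smul, neg_smul, ← sub_eq_add_neg]
    _ = vt x t := by rw [cubic, ← h.eqn x hx t ht, inv_smul_smul₀ two_ne_zero]

theorem MemCEps.dnlsOnSq {a : ℝ} {ε : ℕ → ℝ} (hv : MemCEps a v vx vt vxx ε)
    (hNLS : SatisfiesDNLS a v vt vxx) (he : e ≤ ε n) : DNLSOnSq e (max n 1) v vx vt vxx := by
  have hx : Icc 0 e ⊆ Ici 0 := fun y hy => hy.1
  have ht : Icc 0 e ⊆ Ico 0 a := fun y hy => ⟨hy.1, hy.2.trans_lt (he.trans_lt (hv.eps_lt n))⟩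
  have hpx : PX e v vx := fun x hx' t ht' i j => (hv.deriv_x x (hx hx') t (ht ht') i j).mono hx
  refine ⟨hpx, fun x hx' t ht' i j => (hv.deriv_xx x (hx hx') t (ht ht') i j).mono hx,
    fun x hx' t ht' i j => (hv.deriv_t x (hx hx') t (ht ht') i j).mono ht, ?_,
    fun x hx' t ht' => hNLS x (hx hx') t (ht ht')⟩
  rcases Nat.eq_zero_or_pos n with rfl | hn
  · exact ⟨fun i j => (hv.cont i j).mono (prod_mono hx ht), vx, hpx,
      fun i j => (hv.cont_x i j).mono (prod_mono hx ht)⟩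
  · obtain ⟨c, hc0, hcx, hcc⟩ := hv.smooth_x n
    rw [max_eq_left hn, ← hc0]
    exact HasContXDerivs.of_chain n c (fun j hj => (hcx j hj).of_le he)
      (fun j hj => (hcc j hj).of_le he)

/-- Induction on `k`: the equation expresses `v_t` through `v_xx` and `v v* v`, whose jets
agree by the induction hypothesis at two fewer `x`-derivatives. -/
theorem DNLSOnSq.tJetsAgree (he : 0 < e) (hv : DNLSOnSq e N v vx vt vxx)
    (hw : DNLSOnSq e N w wx wt wxx) (h0 : EqAtZero e v w) :
    ∀ {k m : ℕ}, 2 * k ≤ m → m ≤ N → TJetsAgree e k m v w := by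
  intro k
  induction k with
  | zero =>
    intro m _ hm
    exact ⟨hv.hasContXDerivs.of_le hm, hw.hasContXDerivs.of_le hm, h0⟩
  | succ k ih =>
    intro m hkm hm
    obtain ⟨m, rfl⟩ : ∃ m', m = m' + 2 := ⟨m - 2, by omega⟩
    have hxx : TJetsAgree e k m vxx wxx :=
      ((ih (by omega) hm).of_PX he (by omega) hv.pX hw.pX).of_PX he (by omega) hv.pXX hw.pXX
    exact ⟨(ih (by omega) hm).base, vt, wt, hv.pT, hw.pT,
      (hxx.dnlsTimeDeriv (ih (by omega) (by omega))).congr he hv.eqOnSq_dnlsTimeDeriv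
        hw.eqOnSq_dnlsTimeDeriv⟩

end DNLSSolutions

theorem dnls_derivatives_determined_by_initial_condition_general {m₁ m₂ : ℕ} (a : ℝ)
    (v vx vt vxx : ℝ → ℝ → Matrix (Fin m₁) (Fin m₂) ℂ) (ε : ℕ → ℝ)
    (w wx wt wxx : ℝ → ℝ → Matrix (Fin m₁) (Fin m₂) ℂ) (ε' : ℕ → ℝ)
    (hv : MemCEps a v vx vt vxx ε) (hw : MemCEps a w wx wt wxx ε')
    (hNLSv : SatisfiesDNLS a v vt vxx) (hNLSw : SatisfiesDNLS a w wt wxx)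
    -- the same initial condition
    (hIC : ∀ x ∈ Ici (0:ℝ), v x 0 = w x 0) :
    ∀ r : ℕ, ∀ e : ℝ, 0 < e → e ≤ min (ε (4*r)) (ε' (4*r)) →
      -- the t-derivatives (∂_t^k v)(x,0), k ≤ r, are determined by the initial condition
      (∀ f g : ℕ → ℝ → ℝ → Matrix (Fin m₁) (Fin m₂) ℂ,
        f 0 = v → g 0 = w →
        (∀ k < r, PT e (f k) (f (k+1))) → (∀ k < r, PT e (g k) (g (k+1))) →
        ∀ k ≤ r, ∀ x ∈ Icc (0:ℝ) e, f k x 0 = g k x 0) ∧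
      -- and so are the derivatives (∂_t^k v_x)(x,0), k ≤ r
      (∀ f g : ℕ → ℝ → ℝ → Matrix (Fin m₁) (Fin m₂) ℂ,
        f 0 = vx → g 0 = wx →
        (∀ k < r, PT e (f k) (f (k+1))) → (∀ k < r, PT e (g k) (g (k+1))) →
        ∀ k ≤ r, ∀ x ∈ Icc (0:ℝ) e, f k x 0 = g k x 0) := by
  intro r e he hee
  have hsv := hv.dnlsOnSq hNLSv (hee.trans (min_le_left _ _))
  have hsw := hw.dnlsOnSq hNLSw (hee.trans (min_le_right _ _))
  -- `r` time derivatives consume `2r` x-derivatives, and passing to `v_x` one more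
  have hagree : TJetsAgree e r (2 * r + 1) v w :=
    hsv.tJetsAgree he hsw (fun x hx => hIC x hx.1) (by omega) (by omega)
  exact ⟨fun f g hf0 hg0 hf hg => hagree.eqAtZero_of_chain he f g hf0 hg0 hf hg,
    fun f g hf0 hg0 hf hg =>
      (hagree.of_PX he le_rfl hsv.pX hsw.pX).eqAtZero_of_chain he f g hf0 hg0 hf hg⟩

/-- Proposition 3.1, recovery part.  If `v` and `ṽ` both belong to
`C_ε(𝒟)`, both satisfy the defocusing NLS on `𝒟` and have the same initial condition
`v(x,0) = ṽ(x,0) = 𝒱(x)`, then for every `r` and `k ≤ r` the derivatives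
`(∂_t^k v)(x,0)` and `(∂_t^k v_x)(x,0)` coincide with those of `ṽ` on
`[0, min(ε_{4r}(v), ε_{4r}(ṽ))]`, i.e., they are uniquely determined by `𝒱`. -/
theorem dnls_derivatives_determined_by_initial_condition {m₁ m₂ : ℕ} (a : ℝ) (ha : 0 < a)
    (v vx vt vxx : ℝ → ℝ → Matrix (Fin m₁) (Fin m₂) ℂ) (ε : ℕ → ℝ)
    (w wx wt wxx : ℝ → ℝ → Matrix (Fin m₁) (Fin m₂) ℂ) (ε' : ℕ → ℝ)
    (hv : MemCEps a v vx vt vxx ε) (hw : MemCEps a w wx wt wxx ε')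
    (hNLSv : SatisfiesDNLS a v vt vxx) (hNLSw : SatisfiesDNLS a w wt wxx)
    -- the same initial condition
    (hIC : ∀ x ∈ Ici (0:ℝ), v x 0 = w x 0) :
    ∀ r : ℕ, ∀ e : ℝ, 0 < e → e ≤ min (ε (4*r)) (ε' (4*r)) →
      -- the t-derivatives (∂_t^k v)(x,0), k ≤ r, are determined by the initial condition
      (∀ f g : ℕ → ℝ → ℝ → Matrix (Fin m₁) (Fin m₂) ℂ,
        f 0 = v → g 0 = w →
        (∀ k < r, PT e (f k) (f (k+1))) → (∀ k < r, PT e (g k) (g (k+1))) →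
        ∀ k ≤ r, ∀ x ∈ Icc (0:ℝ) e, f k x 0 = g k x 0) ∧
      -- and so are the derivatives (∂_t^k v_x)(x,0), k ≤ r
      (∀ f g : ℕ → ℝ → ℝ → Matrix (Fin m₁) (Fin m₂) ℂ,
        f 0 = vx → g 0 = wx →
        (∀ k < r, PT e (f k) (f (k+1))) → (∀ k < r, PT e (g k) (g (k+1))) →
        ∀ k ≤ r, ∀ x ∈ Icc (0:ℝ) e, f k x 0 = g k x 0) :=
  dnls_derivatives_determined_by_initial_condition_general a v vx vt vxx ε w wx wt wxx ε' hv hw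
    hNLSv hNLSw hIC
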